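/- arXiv:2505.05997 — 4 statements merged into one kernel-verified Lean document; each statement's English description precedes it below -/
import Mathlib

section
/- For every red/blue coloring of the edges of the ordered complete graph K_n (vertices linearly ordered 1 < 2 < ... < n), there exists a partition of the vertex set into at least 2^(√(log n) − 1) intervals such that between any two of these intervals there is at least one edge of a single fixed color (i.e., a monochromatic complete interval minor of size 2^(√(log n) − 1)), where log denotes the base-2 logarithm. -/
/-!
Take `k ≥ 1` and cut an interval of length `4 · 2^k · 2^(k²) ≤ 2^((k+1)²)` into `4 · 2^k` blocks
of length `2^(k²)`. By induction each block contains a monochromatic interval minor of size `2^k`,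
and by pigeonhole `2^(k+1)` of these minors share a color. If two of those blocks are joined only
by edges of that color, their two minors glue into one of size `2^(k+1)`; otherwise every two of
the blocks are joined by an edge of the other color, so the blocks themselves are the classes of a
minor of size `2^(k+1)`. Hence intervals of length `2^(k²)` contain minors of size `2^k`, and
`k = ⌊√(log₂ n)⌋` gives the bound.
-/

open Real

theorem card_filter_le_eq_of_mem_Ico {T : ℕ} {L R : Fin T → ℕ} (hL : Monotone L)
    (hsep : ∀ i j, i < j → R i ≤ L j) {i : Fin T} {u : ℕ} (hu : u ∈ Set.Ico (L i) (R i)) :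
    (Finset.univ.filter fun j => L j ≤ u).card = i + 1 := by
  have : (Finset.univ.filter fun j => L j ≤ u) = Finset.Iic i := by
    ext j
    simp only [Finset.mem_filter, Finset.mem_univ, true_and, Finset.mem_Iic]
    constructor
    · intro hj
      by_contra hij
      have := hsep i j (not_le.mp hij)
      exact absurd hu.2 (by omega)
    · intro hji
      exact (hL hji).trans hu.1
  rw [this, Fin.card_Iic]

/-- The classes of the minor are the level sets of the monotone labelling `f`; the edges between
them are required to lie inside `[a, b)`. -/
structure IsIntervalMinor {α : Type*} (c : ℕ → ℕ → α) (col : α) (a b t : ℕ) (f : ℕ → ℕ) :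
    Prop where
  monotone : Monotone f
  lt : ∀ u, f u < t
  edge : ∀ i j, i < j → j < t →
    ∃ u ∈ Set.Ico a b, ∃ v ∈ Set.Ico a b, f u = i ∧ f v = j ∧ c u v = col

namespace IsIntervalMinor

variable {α : Type*} {c : ℕ → ℕ → α} {col : α} {a b t : ℕ} {f : ℕ → ℕ}

theorem one : IsIntervalMinor c col a b 1 0 where
  monotone := monotone_const
  lt _ := one_pos
  edge _ _ hij hj := by omega

theorem mono (h : IsIntervalMinor c col a b t f) {a' b' : ℕ} (ha : a' ≤ a) (hb : b ≤ b') :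
    IsIntervalMinor c col a' b' t f where
  monotone := h.monotone
  lt := h.lt
  edge i j hij hj := by
    obtain ⟨u, hu, v, hv, hfu, hfv, huv⟩ := h.edge i j hij hj
    exact ⟨u, Set.Ico_subset_Ico ha hb hu, v, Set.Ico_subset_Ico ha hb hv, hfu, hfv, huv⟩

theorem exists_label (h : IsIntervalMinor c col a b t f) (hab : a < b) {i : ℕ} (hi : i < t) :
    ∃ u ∈ Set.Ico a b, f u = i := by
  by_cases ht : t = 1
  · exact ⟨a, ⟨le_rfl, hab⟩, by have := h.lt a; omega⟩
  · rcases Nat.lt_or_ge i (t - 1) with hi' | hi'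
    · obtain ⟨u, hu, -, -, hfu, -⟩ := h.edge i (t - 1) hi' (by omega)
      exact ⟨u, hu, hfu⟩
    · obtain ⟨-, -, v, hv, -, hfv, -⟩ := h.edge 0 i (by omega) hi
      exact ⟨v, hv, hfv⟩

theorem glue {a' b' t' : ℕ} {g : ℕ → ℕ} (hf : IsIntervalMinor c col a b t f)
    (hg : IsIntervalMinor c col a' b' t' g) (hab : a < b) (hba : b ≤ a') (hab' : a' < b')
    (hcross : ∀ u ∈ Set.Ico a b, ∀ v ∈ Set.Ico a' b', c u v = col) :
    IsIntervalMinor c col a b' (t + t') (fun u => if u < a' then f u else t + g u) where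
  monotone u v huv := by
    have := hf.monotone huv
    have := hg.monotone huv
    have := hf.lt u
    dsimp only
    split_ifs <;> omega
  lt u := by
    have := hf.lt u
    have := hg.lt u
    split_ifs <;> omega
  edge i j hij hj := by
    have hsub : Set.Ico a b ⊆ Set.Ico a b' := Set.Ico_subset_Ico_right (by omega)
    have hsub' : Set.Ico a' b' ⊆ Set.Ico a b' := Set.Ico_subset_Ico_left (by omega)
    by_cases hjt : j < t
    · obtain ⟨u, hu, v, hv, hfu, hfv, huv⟩ := hf.edge i j hij hjt
      refine ⟨u, hsub hu, v, hsub hv, ?_, ?_, huv⟩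
      · rw [if_pos (by grind)]; exact hfu
      · rw [if_pos (by grind)]; exact hfv
    by_cases hit : i < t
    · obtain ⟨u, hu, hfu⟩ := hf.exists_label hab hit
      obtain ⟨v, hv, hgv⟩ := hg.exists_label hab' (i := j - t) (by omega)
      refine ⟨u, hsub hu, v, hsub' hv, ?_, ?_, hcross u hu v hv⟩
      · rw [if_pos (by grind)]; exact hfu
      · rw [if_neg (by grind)]; omega
    · obtain ⟨u, hu, v, hv, hgu, hgv, huv⟩ := hg.edge (i - t) (j - t) (by omega) (by omega)
      refine ⟨u, hsub' hu, v, hsub' hv, ?_, ?_, huv⟩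
      · rw [if_neg (by grind)]; omega
      · rw [if_neg (by grind)]; omega

theorem of_intervals {T : ℕ} (hT : 0 < T) {L R : Fin T → ℕ} (hL : Monotone L)
    (hsep : ∀ i j, i < j → R i ≤ L j) (ha : ∀ i, a ≤ L i) (hb : ∀ i, R i ≤ b)
    (hedge : ∀ i j, i < j →
      ∃ u ∈ Set.Ico (L i) (R i), ∃ v ∈ Set.Ico (L j) (R j), c u v = col) :
    IsIntervalMinor c col a b T fun u => (Finset.univ.filter fun j => L j ≤ u).card - 1 where
  monotone u v huv := by
    have : (Finset.univ.filter fun j => L j ≤ u).card ≤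
        (Finset.univ.filter fun j => L j ≤ v).card :=
      Finset.card_le_card fun j hj => by
        simp only [Finset.mem_filter] at hj ⊢
        exact ⟨hj.1, hj.2.trans huv⟩
    dsimp only
    omega
  lt u := by
    have := (Finset.univ.filter fun j => L j ≤ u).card_le_univ
    rw [Fintype.card_fin] at this
    omega
  edge i j hij hj := by
    obtain ⟨u, hu, v, hv, huv⟩ :=
      hedge ⟨i, by omega⟩ ⟨j, hj⟩ (Fin.mk_lt_mk.mpr hij)
    refine ⟨u, ⟨(ha _).trans hu.1, hu.2.trans_le (hb _)⟩,
      v, ⟨(ha _).trans hv.1, hv.2.trans_le (hb _)⟩, ?_, ?_, huv⟩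
    · rw [card_filter_le_eq_of_mem_Ico hL hsep hu]; rfl
    · rw [card_filter_le_eq_of_mem_Ico hL hsep hv]; rfl

end IsIntervalMinor

theorem exists_isIntervalMinor_double (c : ℕ → ℕ → Bool) {s t : ℕ} (hs : 0 < s) (ht : 0 < t)
    (hblock : ∀ a, ∃ col f, IsIntervalMinor c col a (a + s) t f) (a : ℕ) :
    ∃ col f, IsIntervalMinor c col a (a + 4 * t * s) (2 * t) f := by
  choose colOf minorOf hminor using fun p => hblock (a + p * s)
  obtain ⟨col, -, hS⟩ := Finset.exists_le_card_fiber_of_mul_le_card_of_maps_to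
    (s := Finset.range (4 * t)) (t := Finset.univ) (f := colOf) (n := 2 * t)
    (fun _ _ => Finset.mem_univ _) Finset.univ_nonempty (by simp; omega)
  set S := (Finset.range (4 * t)).filter fun p => colOf p = col
  have hS_mem : ∀ p ∈ S, p < 4 * t ∧ colOf p = col := fun p hp => by simpa [S] using hp
  have hsep : ∀ p q, p < q → a + p * s + s ≤ a + q * s := fun p q hpq => by nlinarith
  have hS_le : ∀ p ∈ S, a + p * s + s ≤ a + 4 * t * s := fun p hp =>
    (hsep p (4 * t) (hS_mem p hp).1).trans (by rw [mul_assoc])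
  by_cases hcomplete : ∃ p ∈ S, ∃ q ∈ S, p < q ∧ ∀ u ∈ Set.Ico (a + p * s) (a + p * s + s),
      ∀ v ∈ Set.Ico (a + q * s) (a + q * s + s), c u v = col
  · obtain ⟨p, hp, q, hq, hpq, hall⟩ := hcomplete
    have hp' := (hS_mem p hp).2 ▸ hminor p
    have hq' := (hS_mem q hq).2 ▸ hminor q
    have hglued := hp'.glue hq' (by omega) (hsep p q hpq) (by omega) hall
    exact ⟨col, _, two_mul t ▸ hglued.mono (by omega) (hS_le q hq)⟩
  · push Not at hcomplete
    set g := S.orderEmbOfCardLe hS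
    refine ⟨!col, _, IsIntervalMinor.of_intervals (by omega)
      (L := fun i => a + g i * s) (R := fun i => a + g i * s + s) ?_ ?_ ?_ ?_ ?_⟩
    · exact fun i j hij => by simp only; gcongr
    · exact fun i j hij => hsep _ _ (g.strictMono hij)
    · exact fun i => by omega
    · exact fun i => hS_le _ (S.orderEmbOfCardLe_mem hS i)
    · intro i j hij
      obtain ⟨u, hu, v, hv, huv⟩ := hcomplete _ (S.orderEmbOfCardLe_mem hS i) _
        (S.orderEmbOfCardLe_mem hS j) (g.strictMono hij)
      exact ⟨u, hu, v, hv, Bool.eq_not_iff.mpr huv⟩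

theorem exists_isIntervalMinor_two_pow (c : ℕ → ℕ → Bool) :
    ∀ k a, ∃ col f, IsIntervalMinor c col a (a + 2 ^ k ^ 2) (2 ^ k) f
  | 0, _ => ⟨true, 0, IsIntervalMinor.one⟩
  | 1, a => by
    refine ⟨c a (a + 1), _, IsIntervalMinor.one.glue (b := a + 1) (a' := a + 1)
      IsIntervalMinor.one (by omega) le_rfl (by omega) fun u hu v hv => ?_⟩
    simp only [Set.mem_Ico] at hu hv
    obtain rfl : u = a := by omega
    obtain rfl : v = u + 1 := by omega
    rfl
  | k + 2, a => by
    obtain ⟨col, f, hf⟩ := exists_isIntervalMinor_double c (by positivity) (by positivity)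
      (exists_isIntervalMinor_two_pow c (k + 1)) a
    refine ⟨col, f, ?_⟩
    rw [show 2 * 2 ^ (k + 1) = 2 ^ (k + 2) by ring] at hf
    refine hf.mono le_rfl ?_
    calc a + 4 * 2 ^ (k + 1) * 2 ^ (k + 1) ^ 2 = a + 2 ^ (k ^ 2 + 3 * k + 4) := by ring
      _ ≤ a + 2 ^ (k + 2) ^ 2 := by gcongr <;> nlinarith

theorem two_pow_sq_sqrt_log_le {n : ℕ} (hn : n ≠ 0) : 2 ^ Nat.sqrt (Nat.log 2 n) ^ 2 ≤ n :=
  (Nat.pow_le_pow_right two_pos (Nat.sqrt_le' _)).trans (Nat.pow_log_le_self 2 hn)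

theorem two_rpow_sqrt_logb_sub_one_le {n : ℕ} (hn : n ≠ 0) :
    (2 : ℝ) ^ (√(logb 2 n) - 1) ≤ 2 ^ Nat.sqrt (Nat.log 2 n) := by
  set k := Nat.sqrt (Nat.log 2 n)
  have hlt : n < 2 ^ (k + 1) ^ 2 :=
    (Nat.lt_pow_succ_log_self one_lt_two n).trans_le
      (Nat.pow_le_pow_right two_pos (Nat.lt_succ_sqrt' _))
  have hlogb : logb 2 n < ((k + 1 : ℕ) : ℝ) ^ 2 := by
    rw [logb_lt_iff_lt_rpow one_lt_two (by positivity), ← Nat.cast_pow, rpow_natCast]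
    exact_mod_cast hlt
  have hsqrt : √(logb 2 n) ≤ k + 1 := by
    rw [sqrt_le_left (by positivity)]
    push_cast at hlogb
    exact hlogb.le
  rw [← rpow_natCast]
  exact rpow_le_rpow_of_exponent_le one_le_two (by linarith)

/-- Any extension of `c` to `ℕ` would do: the minors used live in `[0, n)`. -/
def natColoring {n : ℕ} (c : Fin n → Fin n → Bool) (u v : ℕ) : Bool :=
  if h : u < n ∧ v < n then c ⟨u, h.1⟩ ⟨v, h.2⟩ else false

/-- For every red/blue coloring (`Bool`-valued, symmetric) of the edges of the
ordered complete graph `K_n`, there is a monochromatic complete interval minor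
of size at least `2^(√(log₂ n) − 1)`: a color `col` and a partition of `Fin n`
into `t ≥ 2^(√(log₂ n) − 1)` nonempty intervals (encoded by a monotone
surjection) such that between any two distinct intervals there is an edge of
color `col`. -/
theorem stmt1 {n : ℕ} (hn : 1 ≤ n) (c : Fin n → Fin n → Bool)
    (hsym : ∀ u v : Fin n, c u v = c v u) :
    ∃ (col : Bool) (t : ℕ) (f : Fin n → Fin t),
      (2 : ℝ) ^ (Real.sqrt (Real.logb 2 n) - 1) ≤ (t : ℝ) ∧
      Monotone f ∧ Function.Surjective f ∧
      ∀ i j : Fin t, i ≠ j →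
        ∃ u v : Fin n, f u = i ∧ f v = j ∧ u ≠ v ∧ c u v = col := by
  set k := Nat.sqrt (Nat.log 2 n)
  obtain ⟨col, f, hf⟩ := exists_isIntervalMinor_two_pow (natColoring c) k 0
  replace hf := hf.mono le_rfl (by simpa using two_pow_sq_sqrt_log_le (by omega : n ≠ 0))
  have hedge : ∀ i j : Fin (2 ^ k), i < j → ∃ u v : Fin n,
      f u = i ∧ f v = j ∧ c u v = col := by
    intro i j hij
    obtain ⟨u, hu, v, hv, hfu, hfv, huv⟩ := hf.edge i j hij j.isLt
    refine ⟨⟨u, hu.2⟩, ⟨v, hv.2⟩, hfu, hfv, ?_⟩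
    simpa [natColoring, hu.2, hv.2] using huv
  refine ⟨col, 2 ^ k, fun u => ⟨f u, hf.lt u⟩, ?_, fun u v huv => hf.monotone huv,
    fun i => ?_, fun i j hij => ?_⟩
  · exact_mod_cast two_rpow_sqrt_logb_sub_one_le (by omega)
  · obtain ⟨u, hu, hfu⟩ := hf.exists_label (by omega) i.isLt
    exact ⟨⟨u, hu.2⟩, Fin.ext hfu⟩
  · rcases lt_or_gt_of_ne hij with hlt | hlt
    · obtain ⟨u, v, hfu, hfv, huv⟩ := hedge i j hlt
      exact ⟨u, v, Fin.ext hfu, Fin.ext hfv, by grind, huv⟩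
    · obtain ⟨u, v, hfu, hfv, huv⟩ := hedge j i hlt
      exact ⟨v, u, Fin.ext hfv, Fin.ext hfu, by grind, hsym v u ▸ huv⟩
end

section
/- Let (T, <) be an ordered rooted tree and let \mathcal{I} be an interval family of (T, <) of size at least 2(b+2)^t. Then either T contains a b-branching node, or there is a t-interval path in T. -/
/-- A node `x` is a leaf of the rooted tree given by the parent function
(the root is its own parent, so a leaf is a node with no child other than
possibly itself). -/
def IsTreeLeaf {node : Type*} (parent : node → node) (x : node) : Prop :=
  ∀ y : node, parent y = x → y = x

/-- `x` is a (not necessarily proper) ancestor of `y`. -/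
def TreeAnc {node : Type*} (parent : node → node) (x y : node) : Prop :=
  ∃ k : ℕ, parent^[k] y = x

/-- The set of leaf descendants of a node `x`. -/
def leafSet {node : Type*} (parent : node → node) (x : node) : Set node :=
  {l | IsTreeLeaf parent l ∧ TreeAnc parent x l}

/-!
Suppose no node is `b`-branching. If every child of `x` contains fewer than `M` intervals of `𝓘`,
then `x` contains at most `(b - 1)(M + 1)` of them: list them from left to right and keep every
`(M + 1)`-st; a child meeting two kept intervals contains the `M` or more intervals lying between
them, so the `b` kept intervals would make `x` branching.

Now let `x'` be a lowest node below `z` containing at least `2(b+2)^t - 1` intervals. Its children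
contain fewer, so `x'` contains at most `2(b-1)(b+2)^t`, and at most two intervals cross the
boundary of `L(x')` (one at each end). Hence, if `z` contains at least `2(b+2)^(t+1) - 1`
intervals, one of them, `I`, is disjoint from `L(x')`, and putting `(I, z)` in front of the path
that starts at `x'` (by induction on `t`) gives a longer path.
-/

open Finset

namespace Finset

variable {α : Type*} [LinearOrder α]

theorem exists_sparse_subset (s : Finset α) {b d : ℕ} (h : b * (d + 1) ≤ #s + d) :
    ∃ P ⊆ s, #P = b ∧ ∀ p ∈ P, ∀ q ∈ P, p < q → d ≤ #{r ∈ s | p < r ∧ r < q} := by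
  set e := s.orderEmbOfFin rfl
  have hidx : ∀ i : Fin b, i * (d + 1) + d < #s + d := fun i =>
    calc i * (d + 1) + d < (i + 1) * (d + 1) := by ring_nf; omega
      _ ≤ b * (d + 1) := Nat.mul_le_mul_right _ i.isLt
      _ ≤ #s + d := h
  let f : Fin b → α := fun i => e ⟨i * (d + 1), by have := hidx i; omega⟩
  have hf : StrictMono f := fun i j hij =>
    e.strictMono (Fin.mk_lt_mk.2 (Nat.mul_lt_mul_of_pos_right hij d.succ_pos))
  refine ⟨univ.map ⟨f, hf.injective⟩, fun _ hp => ?_, by simp, ?_⟩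
  · obtain ⟨i, -, rfl⟩ := mem_map.1 hp
    exact s.orderEmbOfFin_mem rfl _
  simp only [mem_map, mem_univ, true_and, Function.Embedding.coeFn_mk]
  rintro _ ⟨i, rfl⟩ _ ⟨j, rfl⟩ hij
  have hij : i * (d + 1) + (d + 1) ≤ j * (d + 1) := by
    simpa [add_one_mul] using Nat.mul_le_mul_right (d + 1) (hf.lt_iff_lt.1 hij)
  let g : Fin d → α := fun k => e ⟨i * (d + 1) + k + 1, by have := hidx j; omega⟩
  have hg : StrictMono g := fun k l hkl => e.strictMono (Fin.mk_lt_mk.2 (by omega))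
  calc d = #(univ.map ⟨g, hg.injective⟩) := by simp
    _ ≤ _ := card_le_card fun _ hr => by
      obtain ⟨k, -, rfl⟩ := mem_map.1 hr
      refine mem_filter.2 ⟨s.orderEmbOfFin_mem rfl _, e.strictMono ?_, e.strictMono ?_⟩ <;>
        simp only [Fin.mk_lt_mk] <;> omega

end Finset

section IntervalIn

variable {α : Type*} [LinearOrder α] {L I S T U : Set α}

def IsIntervalIn (L S : Set α) : Prop :=
  S ⊆ L ∧ ∀ a ∈ S, ∀ c ∈ S, ∀ x ∈ L, a ≤ x → x ≤ c → x ∈ S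

namespace IsIntervalIn

theorem lt_of_lt (hS : IsIntervalIn L S) (hT : IsIntervalIn L T) (hST : Disjoint S T)
    {a b s t : α} (ha : a ∈ S) (hb : b ∈ T) (hab : a < b) (hs : s ∈ S) (ht : t ∈ T) :
    s < t := by
  by_contra! hts
  rcases le_or_gt b s with hbs | hsb
  · exact Set.disjoint_left.1 hST (hS.2 a ha s hs b (hT.1 hb) hab.le hbs) hb
  · exact Set.disjoint_left.1 hST hs (hT.2 t ht b hb s (hS.1 hs) hts hsb.le)

theorem subset_of_between (hI : IsIntervalIn L I) (hS : IsIntervalIn L S)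
    (hT : IsIntervalIn L T) (hU : IsIntervalIn L U) (hST : Disjoint S T) (hTU : Disjoint T U)
    {a c u v w : α} (haI : a ∈ I) (haS : a ∈ S) (hcI : c ∈ I) (hcU : c ∈ U)
    (hu : u ∈ S) (hv : v ∈ T) (hw : w ∈ U) (huv : u < v) (hvw : v < w) : T ⊆ I :=
  fun s hs => hI.2 a haI c hcI s (hT.1 hs) (hS.lt_of_lt hT hST hu hv huv haS hs).le
    (hT.lt_of_lt hU hTU hv hw hvw hs hcU).le

theorem mem_of_lt_of_le (hS : IsIntervalIn L S) (hI : IsIntervalIn L I) {a c i : α}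
    (haS : a ∈ S) (haI : a ∉ I) (hcS : c ∈ S) (hcI : c ∈ I) (hac : a < c)
    (hi : i ∈ I) (hic : i ≤ c) : i ∈ S := by
  refine hS.2 a haS c hcS i (hI.1 hi) ?_ hic
  by_contra! hia
  exact haI (hI.2 i hi c hcI a (hS.1 haS) hia.le hac.le)

theorem mem_of_lt_of_ge (hS : IsIntervalIn L S) (hI : IsIntervalIn L I) {a c i : α}
    (haS : a ∈ S) (haI : a ∉ I) (hcS : c ∈ S) (hcI : c ∈ I) (hca : c < a)
    (hi : i ∈ I) (hci : c ≤ i) : i ∈ S := by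
  refine hS.2 c hcS a haS i (hI.1 hi) hci ?_
  by_contra! hai
  exact haI (hI.2 c hcI i hi a (hS.1 haS) hca.le hai.le)

end IsIntervalIn

open Classical in
theorem card_filter_inter_nonempty_le {𝓕 : Finset (Set α)}
    (h𝓕 : ∀ S ∈ 𝓕, IsIntervalIn L S) (hdisj : (𝓕 : Set (Set α)).PairwiseDisjoint id)
    (hI : IsIntervalIn L I) :
    #{S ∈ 𝓕 | (S ∩ I).Nonempty} ≤ #{S ∈ 𝓕 | S ⊆ I} + 2 := by
  set below := {S ∈ 𝓕 | ∃ a ∈ S, a ∉ I ∧ ∃ c ∈ S, c ∈ I ∧ a < c}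
  set above := {S ∈ 𝓕 | ∃ a ∈ S, a ∉ I ∧ ∃ c ∈ S, c ∈ I ∧ c < a}
  have hbelow : #below ≤ 1 := by
    refine card_le_one.2 fun S hS S' hS' => ?_
    obtain ⟨hS𝓕, a, haS, haI, c, hcS, hcI, hac⟩ := mem_filter.1 hS
    obtain ⟨hS'𝓕, a', ha'S', ha'I, c', hc'S', hc'I, hac'⟩ := mem_filter.1 hS'
    rcases le_total c c' with h | h
    · exact hdisj.elim_set hS𝓕 hS'𝓕 c hcS
        ((h𝓕 S' hS'𝓕).mem_of_lt_of_le hI ha'S' ha'I hc'S' hc'I hac' hcI h)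
    · exact hdisj.elim_set hS𝓕 hS'𝓕 c'
        ((h𝓕 S hS𝓕).mem_of_lt_of_le hI haS haI hcS hcI hac hc'I h) hc'S'
  have habove : #above ≤ 1 := by
    refine card_le_one.2 fun S hS S' hS' => ?_
    obtain ⟨hS𝓕, a, haS, haI, c, hcS, hcI, hca⟩ := mem_filter.1 hS
    obtain ⟨hS'𝓕, a', ha'S', ha'I, c', hc'S', hc'I, hca'⟩ := mem_filter.1 hS'
    rcases le_total c' c with h | h
    · exact hdisj.elim_set hS𝓕 hS'𝓕 c hcS
        ((h𝓕 S' hS'𝓕).mem_of_lt_of_ge hI ha'S' ha'I hc'S' hc'I hca' hcI h)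
    · exact hdisj.elim_set hS𝓕 hS'𝓕 c'
        ((h𝓕 S hS𝓕).mem_of_lt_of_ge hI haS haI hcS hcI hca hc'I h) hc'S'
  have hsub :
      {S ∈ 𝓕 | (S ∩ I).Nonempty} ⊆ {S ∈ 𝓕 | S ⊆ I} ∪ (below ∪ above) := by
    intro S hS
    obtain ⟨hS𝓕, c, hcS, hcI⟩ := mem_filter.1 hS
    simp only [mem_union, mem_filter, hS𝓕, true_and, below, above]
    by_cases hSI : S ⊆ I
    · exact Or.inl hSI
    obtain ⟨a, haS, haI⟩ := Set.not_subset.1 hSI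
    rcases lt_or_gt_of_ne (show a ≠ c by rintro rfl; exact haI hcI) with hac | hca
    · exact Or.inr (Or.inl ⟨a, haS, haI, c, hcS, hcI, hac⟩)
    · exact Or.inr (Or.inr ⟨a, haS, haI, c, hcS, hcI, hca⟩)
  calc _ ≤ #({S ∈ 𝓕 | S ⊆ I} ∪ (below ∪ above)) := card_le_card hsub
    _ ≤ #{S ∈ 𝓕 | S ⊆ I} + (#below + #above) :=
      (card_union_le _ _).trans (Nat.add_le_add_left (card_union_le _ _) _)
    _ ≤ _ := by omega

end IntervalIn

section Tree

variable {node : Type*} {parent : node → node}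

theorem leafSet_subset_of_parent_eq {x y : node} (h : parent y = x) :
    leafSet parent y ⊆ leafSet parent x :=
  fun _ ⟨hl, k, hk⟩ => ⟨hl, k + 1, by rw [Function.iterate_succ_apply', hk, h]⟩

theorem exists_iterate_eq_of_parent_eq {root x y : node} (hroot : parent root = root)
    (hy : parent y = x) (hyx : y ≠ x) {k : ℕ} (hk : parent^[k] y = root) :
    ∃ k' < k, parent^[k'] x = root := by
  cases k with
  | zero => subst hk; exact absurd (hy.symm.trans hroot).symm hyx
  | succ k => exact ⟨k, k.lt_succ_self, by rwa [Function.iterate_succ_apply, hy] at hk⟩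

theorem exists_lowest_node [Fintype node] {root : node} (hroot : parent root = root)
    (hreach : ∀ x, ∃ k, parent^[k] x = root) {p : node → Prop} {z : node} (hz : p z) :
    ∃ x, p x ∧ ∀ y, parent y = x → y ≠ x → ¬ p y := by
  classical
  obtain ⟨x, hx, hmax⟩ := (univ.filter p).exists_max_image (fun x => Nat.find (hreach x))
    ⟨z, mem_filter.2 ⟨mem_univ z, hz⟩⟩
  refine ⟨x, (mem_filter.1 hx).2, fun y hy hyx hpy => ?_⟩
  obtain ⟨k, hk, hkx⟩ :=
    exists_iterate_eq_of_parent_eq hroot hy hyx (Nat.find_spec (hreach y))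
  have := hmax y (mem_filter.2 ⟨mem_univ y, hpy⟩)
  have := Nat.find_min' (hreach x) hkx
  omega

end Tree

section Paths

variable {node : Type*} {parent : node → node} {𝓘 𝓙 : Finset (Set node)}

def IsBranching (parent : node → node) (𝓘 : Finset (Set node)) (b : ℕ) (x : node) : Prop :=
  ∃ 𝓘' ⊆ 𝓘, b ≤ 𝓘'.card ∧ (∀ S ∈ 𝓘', S ⊆ leafSet parent x) ∧
    ∀ y : node, parent y = x → y ≠ x →
      ¬ ∃ S ∈ 𝓘', ∃ S' ∈ 𝓘', S ≠ S' ∧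
        (leafSet parent y ∩ S).Nonempty ∧ (leafSet parent y ∩ S').Nonempty

theorem IsBranching.mono {b : ℕ} {x : node} (h : IsBranching parent 𝓘 b x) (h𝓘 : 𝓘 ⊆ 𝓙) :
    IsBranching parent 𝓙 b x :=
  let ⟨𝓘', hsub, hrest⟩ := h
  ⟨𝓘', hsub.trans h𝓘, hrest⟩

def IsIntervalPath (parent : node → node) (𝓘 : Finset (Set node)) {t : ℕ}
    (J : Fin t → Set node) (x : Fin t → node) : Prop :=
  (∀ j, J j ∈ 𝓘) ∧ (∀ j j' : Fin t, j ≤ j' → J j' ⊆ leafSet parent (x j)) ∧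
    ∀ j j' : Fin t, (j' : ℕ) + 1 = j → leafSet parent (x j) ∩ J j' = ∅

namespace IsIntervalPath

variable {t : ℕ}

theorem mono {J : Fin t → Set node} {x : Fin t → node} (h : IsIntervalPath parent 𝓘 J x)
    (h𝓘 : 𝓘 ⊆ 𝓙) : IsIntervalPath parent 𝓙 J x :=
  ⟨fun j => h𝓘 (h.1 j), h.2⟩

theorem single {I : Set node} (hI : I ∈ 𝓘) (z : node) (hIz : I ⊆ leafSet parent z) :
    IsIntervalPath parent 𝓘 (fun _ : Fin 1 => I) (fun _ => z) :=
  ⟨fun _ => hI, fun _ _ _ => hIz, fun j j' h => absurd h (by omega)⟩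

theorem tail {J : Fin (t + 1) → Set node} {x : Fin (t + 1) → node}
    (h : IsIntervalPath parent 𝓘 J x) : IsIntervalPath parent 𝓘 (Fin.tail J) (Fin.tail x) :=
  ⟨fun j => h.1 j.succ,
    fun j j' hjj' => h.2.1 j.succ j'.succ (Fin.succ_le_succ_iff.2 hjj'),
    fun j j' hjj' => h.2.2 j.succ j'.succ (by simp [hjj'])⟩

theorem cons {J : Fin (t + 1) → Set node} {x : Fin (t + 1) → node}
    (h : IsIntervalPath parent 𝓘 J x) {I : Set node} {z : node} (hI : I ∈ 𝓘)
    (hIz : I ⊆ leafSet parent z) (hxz : leafSet parent (x 0) ⊆ leafSet parent z)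
    (hxI : leafSet parent (x 0) ∩ I = ∅) :
    IsIntervalPath parent 𝓘 (Fin.cons I J : Fin (t + 2) → Set node) (Fin.cons z x) := by
  refine ⟨Fin.cases hI h.1, Fin.cases ?_ ?_, Fin.cases ?_ ?_⟩
  · exact Fin.cases (fun _ => hIz) fun j' _ => (h.2.1 0 j' (Fin.zero_le _)).trans hxz
  · exact fun j => Fin.cases (fun hj => absurd hj (by simp))
      fun j' hjj' => h.2.1 j j' (Fin.succ_le_succ_iff.1 hjj')
  · exact fun j' hj' => absurd hj' (by simp)
  · refine fun j => Fin.cases (fun hj => ?_) fun j' hjj' => h.2.2 j j' (by simpa using hjj')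
    obtain rfl : j = 0 := Fin.ext (by simpa using hj.symm)
    simpa using hxI

end IsIntervalPath

open Classical in
noncomputable def intervalsBelow (parent : node → node) (𝓘 : Finset (Set node)) (x : node) :
    Finset (Set node) :=
  {S ∈ 𝓘 | S ⊆ leafSet parent x}

theorem mem_intervalsBelow {x : node} {S : Set node} :
    S ∈ intervalsBelow parent 𝓘 x ↔ S ∈ 𝓘 ∧ S ⊆ leafSet parent x := by
  simp [intervalsBelow]

end Paths

section Counting

variable {node : Type*} [LinearOrder node] {parent : node → node} {𝓘 : Finset (Set node)}

theorem card_intervalsBelow_add_le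
    (hord : ∀ x, IsIntervalIn {l | IsTreeLeaf parent l} (leafSet parent x))
    (h𝓘 : ∀ S ∈ 𝓘, IsIntervalIn {l | IsTreeLeaf parent l} S)
    (hdisj : (𝓘 : Set (Set node)).PairwiseDisjoint id) (hne : ∀ S ∈ 𝓘, S.Nonempty)
    {b M : ℕ} {x : node} (hx : ¬ IsBranching parent 𝓘 b x)
    (hchild : ∀ y, parent y = x → y ≠ x → #(intervalsBelow parent 𝓘 y) < M) :
    #(intervalsBelow parent 𝓘 x) + (M + 1) ≤ b * (M + 1) := by
  classical
  by_contra! hlt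
  set F := intervalsBelow parent 𝓘 x
  have hF𝓘 : F ⊆ 𝓘 := fun S hS => (mem_intervalsBelow.1 hS).1
  have : Nonempty node := ⟨x⟩
  -- Disjoint intervals are ordered as any points chosen in them are.
  choose! rep hrep using hne
  have hrep_inj : Set.InjOn rep 𝓘 := fun S hS S' hS' h =>
    hdisj.elim_set hS hS' _ (hrep S hS) (h ▸ hrep S' hS')
  obtain ⟨P, hPF, hPcard, hPgap⟩ := (F.image rep).exists_sparse_subset (b := b) (d := M) <| by
    rw [card_image_of_injOn (hrep_inj.mono (coe_subset.2 hF𝓘))]; omega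
  set 𝓘' := {S ∈ F | rep S ∈ P}
  have hcard : b ≤ #𝓘' := by
    refine hPcard ▸ (card_le_card (t := 𝓘'.image rep) fun p hp => ?_).trans card_image_le
    obtain ⟨S, hS, rfl⟩ := mem_image.1 (hPF hp)
    exact mem_image_of_mem rep (mem_filter.2 ⟨hS, hp⟩)
  refine hx ⟨𝓘', (filter_subset _ _).trans hF𝓘, hcard,
    fun S hS => (mem_intervalsBelow.1 (mem_filter.1 hS).1).2, fun y hy hyx => ?_⟩
  rintro ⟨S, hS, S', hS', hSS', ⟨a, haY, haS⟩, ⟨c, hcY, hcS'⟩⟩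
  wlog hlt : rep S < rep S' generalizing S S' a c
  · have hrep_ne : rep S ≠ rep S' := fun h =>
      hSS' (hrep_inj (hF𝓘 (mem_filter.1 hS).1) (hF𝓘 (mem_filter.1 hS').1) h)
    exact this S' hS' S hS hSS'.symm c hcY hcS' a haY haS (hrep_ne.lt_or_gt.resolve_left hlt)
  have hS𝓘 := hF𝓘 (mem_filter.1 hS).1
  have hS'𝓘 := hF𝓘 (mem_filter.1 hS').1
  have hgap := hPgap _ (mem_filter.1 hS).2 _ (mem_filter.1 hS').2 hlt
  have hsub : {r ∈ F.image rep | rep S < r ∧ r < rep S'} ⊆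
      (intervalsBelow parent 𝓘 y).image rep := by
    intro r hr
    obtain ⟨hrF, h₁, h₂⟩ := mem_filter.1 hr
    obtain ⟨T, hT, rfl⟩ := mem_image.1 hrF
    have hT𝓘 := hF𝓘 hT
    refine mem_image_of_mem rep (mem_intervalsBelow.2 ⟨hT𝓘, ?_⟩)
    exact (hord y).subset_of_between (h𝓘 S hS𝓘) (h𝓘 T hT𝓘) (h𝓘 S' hS'𝓘)
      (hdisj hS𝓘 hT𝓘 (ne_of_apply_ne rep h₁.ne))
      (hdisj hT𝓘 hS'𝓘 (ne_of_apply_ne rep h₂.ne))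
      haY haS hcY hcS' (hrep S hS𝓘) (hrep T hT𝓘) (hrep S' hS'𝓘) h₁ h₂
  have := (card_le_card hsub).trans card_image_le
  have := hchild y hy hyx
  omega

theorem exists_isIntervalPath_of_forall_not_isBranching [Fintype node]
    (hord : ∀ x, IsIntervalIn {l | IsTreeLeaf parent l} (leafSet parent x))
    (h𝓘 : ∀ S ∈ 𝓘, IsIntervalIn {l | IsTreeLeaf parent l} S)
    (hdisj : (𝓘 : Set (Set node)).PairwiseDisjoint id) (hne : ∀ S ∈ 𝓘, S.Nonempty)
    {root : node} (hroot : parent root = root) (hreach : ∀ x, ∃ k, parent^[k] x = root) {b : ℕ}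
    (hnb : ∀ x, ¬ IsBranching parent 𝓘 b x) (t : ℕ) (z : node)
    (hz : 2 * (b + 2) ^ t ≤ #(intervalsBelow parent 𝓘 z) + 1) :
    ∃ (J : Fin (t + 1) → Set node) (x : Fin (t + 1) → node),
      IsIntervalPath parent 𝓘 J x ∧ x 0 = z := by
  classical
  induction t generalizing z with
  | zero =>
    rw [pow_zero] at hz
    obtain ⟨I, hI⟩ := card_pos.1 (by omega : 0 < #(intervalsBelow parent 𝓘 z))
    obtain ⟨hI𝓘, hIz⟩ := mem_intervalsBelow.1 hI
    exact ⟨_, _, .single hI𝓘 z hIz, rfl⟩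
  | succ t ih =>
    set B := (b + 2) ^ t with hB
    have hBz : 2 * B ≤ #(intervalsBelow parent 𝓘 z) + 1 :=
      le_trans (Nat.mul_le_mul_left 2 (Nat.pow_le_pow_right (by omega) t.le_succ)) hz
    obtain ⟨x', ⟨hx'z, hx'⟩, hlow⟩ := exists_lowest_node hroot hreach
      (p := fun w => leafSet parent w ⊆ leafSet parent z ∧
        2 * B ≤ #(intervalsBelow parent 𝓘 w) + 1) ⟨subset_rfl, hBz⟩
    have hB0 : 0 < B := by positivity
    obtain ⟨M, hM⟩ : ∃ M, 2 * B = M + 1 := ⟨2 * B - 1, by omega⟩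
    have hkey := card_intervalsBelow_add_le hord h𝓘 hdisj hne (hnb x') (M := M)
      fun y hy hyx => by
        have := hlow y hy hyx
        simp only [not_and, not_le] at this
        have := this ((leafSet_subset_of_parent_eq hy).trans hx'z)
        omega
    obtain ⟨I, hI, hIz, hIx'⟩ : ∃ I ∈ 𝓘, I ⊆ leafSet parent z ∧ leafSet parent x' ∩ I = ∅ := by
      by_contra! hmeet
      have hsub : intervalsBelow parent 𝓘 z ⊆ {S ∈ 𝓘 | (S ∩ leafSet parent x').Nonempty} :=
        fun S hS => by
          obtain ⟨hS𝓘, hSz⟩ := mem_intervalsBelow.1 hS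
          exact mem_filter.2 ⟨hS𝓘, Set.inter_comm S _ ▸ hmeet S hS𝓘 hSz⟩
      have hcross := (card_le_card hsub).trans
        (card_filter_inter_nonempty_le h𝓘 hdisj (hord x'))
      change _ ≤ #(intervalsBelow parent 𝓘 x') + 2 at hcross
      rw [pow_succ, ← hB] at hz
      rw [← hM] at hkey
      nlinarith
    obtain ⟨J, x, hJx, hx0⟩ := ih x' hx'
    exact ⟨_, _, hJx.cons hI hIz (hx0 ▸ hx'z) (hx0 ▸ hIx'), rfl⟩

end Counting

/-- **K\H{o}nig-type lemma for ordered trees.**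
Let `(T, <)` be an ordered rooted tree (the set of leaf descendants of every
node is an interval of the order on the leaves), and let `𝓘` be a family of
pairwise disjoint intervals of leaves with `|𝓘| ≥ 2(b+2)^t`.  Then either some
node is `b`-branching, or there is a `t`-interval path. -/
theorem stmt4 {node : Type} [Fintype node] [LinearOrder node]
    (root : node) (parent : node → node)
    (hroot : parent root = root)
    (hreach : ∀ x : node, ∃ k : ℕ, parent^[k] x = root)
    (hord : ∀ (x a b c : node), a ∈ leafSet parent x → c ∈ leafSet parent x →
      IsTreeLeaf parent b → a ≤ b → b ≤ c → b ∈ leafSet parent x)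
    (b t : ℕ) (𝓘 : Finset (Set node))
    (hleaf : ∀ S ∈ 𝓘, ∀ x ∈ S, IsTreeLeaf parent x)
    (hint : ∀ S ∈ 𝓘, ∀ a ∈ S, ∀ c ∈ S, ∀ x : node,
      IsTreeLeaf parent x → a ≤ x → x ≤ c → x ∈ S)
    (hdisj : ∀ S ∈ 𝓘, ∀ S' ∈ 𝓘, S ≠ S' → S ∩ S' = ∅)
    (hcard : 2 * (b + 2) ^ t ≤ 𝓘.card) :
    (∃ x : node, ∃ 𝓘' ⊆ 𝓘, b ≤ 𝓘'.card ∧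
        (∀ S ∈ 𝓘', S ⊆ leafSet parent x) ∧
        ∀ y : node, parent y = x → y ≠ x →
          ¬ ∃ S ∈ 𝓘', ∃ S' ∈ 𝓘', S ≠ S' ∧
            (leafSet parent y ∩ S).Nonempty ∧ (leafSet parent y ∩ S').Nonempty)
    ∨ (∃ (J : Fin t → Set node) (x : Fin t → node),
        (∀ j : Fin t, J j ∈ 𝓘) ∧
        (∀ j j' : Fin t, j ≤ j' → J j' ⊆ leafSet parent (x j)) ∧
        ∀ j j' : Fin t, (j' : ℕ) + 1 = (j : ℕ) →
          leafSet parent (x j) ∩ J j' = ∅) := by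
  classical
  by_cases hbr : ∃ x, IsBranching parent 𝓘 b x
  · exact Or.inl hbr
  push Not at hbr
  -- The counting picks a point in each interval, so a possible empty member of `𝓘` is dropped.
  have hsub : 𝓘.erase ∅ ⊆ 𝓘 := erase_subset _ _
  have hbelow : intervalsBelow parent (𝓘.erase ∅) root = 𝓘.erase ∅ :=
    filter_true_of_mem fun S hS l hl => ⟨hleaf S (hsub hS) l hl, hreach l⟩
  obtain ⟨J, x, hJx, -⟩ := exists_isIntervalPath_of_forall_not_isBranching
    (fun x => ⟨fun _ hl => hl.1, fun a ha c hc l hl => hord x a l c ha hc hl⟩)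
    (fun S hS => ⟨hleaf S (hsub hS), hint S (hsub hS)⟩)
    (fun S hS S' hS' h => Set.disjoint_iff_inter_eq_empty.2
      (hdisj S (hsub hS) S' (hsub hS') h))
    (fun S hS => Set.nonempty_iff_ne_empty.2 (ne_of_mem_erase hS))
    hroot hreach (fun x hx => hbr x (hx.mono hsub)) t root
    (by rw [hbelow]; have := pred_card_le_card_erase (s := 𝓘) (a := ∅); omega)
  exact Or.inr ⟨_, _, hJx.tail.mono hsub⟩
end

section
/- Let q ≥ 2 and suppose the edges of the ordered complete graph K_q are 2-colored with no monochromatic clique of size s. Form the ordered complete graph K_{q^i} by i−1 successive lexicographic substitutions of this colored K_q into itself. If f(i) denotes the maximum size of a monochromatic complete interval minor of K_{q^i} under the resulting coloring, then f(i) ≤ s · f(i−1) + q for all i ≥ 2, and consequently f(i) ≤ q · s^i. -/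
/-- The coloring of the edges of the ordered complete graph on `Fin (q^i)`
obtained from a base coloring `c` of `K_q` by `i−1` successive lexicographic
substitutions: writing vertices in base `q`, the color of the edge `{u, v}` is
the base color of the pair of most significant digits where `u` and `v`
differ. -/
def lexColor (q : ℕ) (c : ℕ → ℕ → Bool) (i : ℕ) (u v : ℕ) : Bool :=
  let D := Nat.findGreatest (fun j => u / q ^ j % q ≠ v / q ^ j % q) i
  c (u / q ^ D % q) (v / q ^ D % q)

/-- The coloring `lexColor q c i` of the ordered complete graph on `Fin (q^i)`
admits a monochromatic complete interval minor of size `t`: a color and a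
partition of `Fin (q^i)` into `t` nonempty intervals with an edge of that
color between any two distinct intervals. -/
def HasMonoCIM (q : ℕ) (c : ℕ → ℕ → Bool) (i t : ℕ) : Prop :=
  ∃ (col : Bool) (f : Fin (q ^ i) → Fin t), Monotone f ∧ Function.Surjective f ∧
    ∀ a b : Fin t, a ≠ b → ∃ u v : Fin (q ^ i),
      f u = a ∧ f v = b ∧ lexColor q c i (u : ℕ) (v : ℕ) = col

/-!
Split `K_{q^(J+1)}` into `q` blocks of `q^J` consecutive vertices; between two blocks every edge
has the base colour of the pair of blocks, and inside a block the colouring is that of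
`K_{q^J}`. In a monochromatic complete interval minor, at most `q` intervals meet two blocks.
The blocks that contain a whole interval form a monochromatic clique of `K_q`, so there are
fewer than `s` of them, and the intervals inside one block form a minor of `K_{q^J}`. Hence
`f(J+1) ≤ s·f(J) + q`, and iterating from `f(1) ≤ q` gives `f(i) + q ≤ q·s^i`.
-/

open Finset Function

section Digits

variable {q : ℕ}

lemma mul_pow_add_lt_pow_succ {J m x : ℕ} (hm : m < q) (hx : x < q ^ J) :
    m * q ^ J + x < q ^ (J + 1) := by
  rw [pow_succ', mul_comm m]
  exact Nat.mul_add_lt_mul_of_lt_of_lt hm hx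

lemma div_pow_mod_eq_zero_of_lt_pow {J j x : ℕ} (hq : 0 < q) (hx : x < q ^ J) (hj : J ≤ j) :
    x / q ^ j % q = 0 := by
  rw [Nat.div_eq_of_lt (hx.trans_le (Nat.pow_le_pow_right hq hj)), Nat.zero_mod]

lemma mul_pow_add_div_pow_mod_of_lt {J j m x : ℕ} (hq : 0 < q) (hj : j < J) :
    (m * q ^ J + x) / q ^ j % q = x / q ^ j % q := by
  obtain ⟨k, rfl⟩ := Nat.exists_eq_add_of_lt hj
  rw [show m * q ^ (j + k + 1) + x = x + q ^ j * (q * (m * q ^ k)) by ring,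
    Nat.add_mul_div_left _ _ (pow_pos hq j), Nat.add_mul_mod_self_left]

lemma mul_pow_add_div_pow_mod_self {J m x : ℕ} (hm : m < q) (hx : x < q ^ J) :
    (m * q ^ J + x) / q ^ J % q = m := by
  rw [add_comm, mul_comm, Nat.add_mul_div_left _ _ (Nat.zero_lt_of_lt hx), Nat.div_eq_of_lt hx,
    zero_add, Nat.mod_eq_of_lt hm]

end Digits

section LexColor

variable {q : ℕ} {c : ℕ → ℕ → Bool} {J m x y : ℕ}

theorem lexColor_mul_pow_add_of_ne {m' : ℕ} (hm : m < q) (hm' : m' < q) (hne : m ≠ m')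
    (hx : x < q ^ J) (hy : y < q ^ J) :
    lexColor q c (J + 1) (m * q ^ J + x) (m' * q ^ J + y) = c m m' := by
  have hq : 0 < q := Nat.zero_lt_of_lt hm
  have hfind : Nat.findGreatest
      (fun j => (m * q ^ J + x) / q ^ j % q ≠ (m' * q ^ J + y) / q ^ j % q) (J + 1) = J := by
    refine Nat.findGreatest_eq_iff.2 ⟨J.le_succ, fun _ => ?_, fun n hJn _ => ?_⟩
    · rwa [mul_pow_add_div_pow_mod_self hm hx, mul_pow_add_div_pow_mod_self hm' hy]
    · rw [div_pow_mod_eq_zero_of_lt_pow hq (mul_pow_add_lt_pow_succ hm hx) hJn,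
        div_pow_mod_eq_zero_of_lt_pow hq (mul_pow_add_lt_pow_succ hm' hy) hJn]
      exact not_not.2 rfl
  simp only [lexColor, hfind, mul_pow_add_div_pow_mod_self hm hx,
    mul_pow_add_div_pow_mod_self hm' hy]

theorem lexColor_mul_pow_add_self (hJ : J ≠ 0) (hm : m < q) (hx : x < q ^ J) (hy : y < q ^ J) :
    lexColor q c (J + 1) (m * q ^ J + x) (m * q ^ J + y) = lexColor q c J x y := by
  have hq : 0 < q := Nat.zero_lt_of_lt hm
  set D := Nat.findGreatest (fun j => x / q ^ j % q ≠ y / q ^ j % q) J with hD_def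
  obtain ⟨hDJ, hDspec, hDmax⟩ := Nat.findGreatest_eq_iff.1 hD_def.symm
  -- The digits of `x` and `y` at position `J` vanish, so `D ≠ J`.
  have hDlt : D < J := by
    refine hDJ.lt_of_ne fun h => hDspec (h ▸ hJ) ?_
    rw [h, div_pow_mod_eq_zero_of_lt_pow hq hx le_rfl, div_pow_mod_eq_zero_of_lt_pow hq hy le_rfl]
  have hfind : Nat.findGreatest
      (fun j => (m * q ^ J + x) / q ^ j % q ≠ (m * q ^ J + y) / q ^ j % q) (J + 1) = D := by
    refine Nat.findGreatest_eq_iff.2 ⟨by omega, fun hD => ?_, fun n hDn hn => ?_⟩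
    · rw [mul_pow_add_div_pow_mod_of_lt hq hDlt, mul_pow_add_div_pow_mod_of_lt hq hDlt]
      exact hDspec hD
    · rcases lt_trichotomy n J with hnJ | rfl | hJn
      · rw [mul_pow_add_div_pow_mod_of_lt hq hnJ, mul_pow_add_div_pow_mod_of_lt hq hnJ]
        exact hDmax hDn hnJ.le
      · rw [mul_pow_add_div_pow_mod_self hm hx, mul_pow_add_div_pow_mod_self hm hy]
        exact not_not.2 rfl
      · rw [div_pow_mod_eq_zero_of_lt_pow hq (mul_pow_add_lt_pow_succ hm hx) hJn,
          div_pow_mod_eq_zero_of_lt_pow hq (mul_pow_add_lt_pow_succ hm hy) hJn]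
        exact not_not.2 rfl
  simp only [lexColor, hfind, ← hD_def, mul_pow_add_div_pow_mod_of_lt hq hDlt]

end LexColor

-- An interval that is not inside one block spans a block boundary, so the blocks of the
-- left ends of such intervals strictly increase.
theorem card_le_card_add_sum_card_subset_fiber {α β γ : Type*} [LinearOrder α] [Fintype α]
    [LinearOrder β] [Fintype β] [LinearOrder γ] [Fintype γ] {f : α → γ} (hf : Monotone f)
    (hfs : Surjective f) {b : α → β} (hb : Monotone b) :
    Fintype.card γ ≤ Fintype.card β + ∑ m, #{a | ∀ u, f u = a → b u = m} := by
  classical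
  set I : β → Finset γ := fun m => {a | ∀ u, f u = a → b u = m} with hI
  have hdisj : ((univ : Finset β) : Set β).PairwiseDisjoint I := by
    intro m _ m' _ hne
    refine disjoint_left.2 fun a ha ha' => hne ?_
    obtain ⟨u, rfl⟩ := hfs a
    simp only [hI, mem_filter, mem_univ, true_and] at ha ha'
    exact (ha u rfl).symm.trans (ha' u rfl)
  have hlo : ∀ a, ∃ u, f u = a ∧ ∀ v, f v = a → u ≤ v := fun a => by
    obtain ⟨w, hw⟩ := hfs a
    obtain ⟨u, hu, hmin⟩ := exists_min_image {v | f v = a} id ⟨w, by simpa using hw⟩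
    exact ⟨u, by simpa using hu, fun v hv => hmin v (by simpa using hv)⟩
  choose lo hlo_eq hlo_le using hlo
  have hcross : #(univ \ univ.biUnion I) ≤ Fintype.card β := by
    refine card_le_card_of_injOn (fun a => b (lo a)) (fun _ _ => mem_univ _) ?_
    refine StrictMonoOn.injOn fun a ha a' _ haa' => ?_
    simp only [mem_coe, mem_sdiff, mem_univ, true_and, mem_biUnion, hI, mem_filter, not_exists,
      not_forall] at ha
    obtain ⟨u, hu, hub⟩ := ha (b (lo a))
    calc b (lo a) < b u := (hb (hlo_le a u hu)).lt_of_ne (Ne.symm hub)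
      _ ≤ b (lo a') := hb (hf.reflect_lt (by rwa [hu, hlo_eq])).le
  calc Fintype.card γ = #(univ : Finset γ) := card_univ.symm
    _ ≤ #(univ \ univ.biUnion I) + #(univ.biUnion I) := card_le_card_sdiff_add_card
    _ ≤ Fintype.card β + ∑ m, #(I m) := by
      rw [card_biUnion hdisj]
      exact Nat.add_le_add_right hcross _

theorem OrderEmbedding.exists_monotone_leftInverse_of_fin {β : Type*} [Preorder β] {k : ℕ}
    (hk : 0 < k) (e : Fin k ↪o β) : ∃ r : β → Fin k, Monotone r ∧ ∀ i, r (e i) = i := by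
  classical
  refine ⟨fun b => ⟨#{i | e i ≤ b} - 1, ?_⟩, fun b b' hbb' => ?_, fun j => ?_⟩
  · have := card_filter_le (univ : Finset (Fin k)) (fun i => e i ≤ b)
    rw [card_univ, Fintype.card_fin] at this
    omega
  · have : #{i | e i ≤ b} ≤ #{i | e i ≤ b'} :=
      card_le_card fun i hi => by
        simp only [mem_filter, mem_univ, true_and] at hi ⊢
        exact hi.trans hbb'
    exact Fin.mk_le_mk.2 (by omega)
  · have : ({i | e i ≤ e j} : Finset (Fin k)) = Iic j := by ext; simp
    ext
    simp only [this, Fin.card_Iic, add_tsub_cancel_right]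

def IsMonoCIM (q : ℕ) (c : ℕ → ℕ → Bool) (i t : ℕ) (col : Bool) (f : Fin (q ^ i) → Fin t) :
    Prop :=
  Monotone f ∧ Surjective f ∧ ∀ a b : Fin t, a ≠ b → ∃ u v : Fin (q ^ i),
    f u = a ∧ f v = b ∧ lexColor q c i (u : ℕ) (v : ℕ) = col

section MonoCIM

variable {q : ℕ} {c : ℕ → ℕ → Bool}

theorem HasMonoCIM.le_pow {i t : ℕ} (h : HasMonoCIM q c i t) : t ≤ q ^ i := by
  obtain ⟨-, f, -, hf, -⟩ := h
  simpa using Fintype.card_le_of_surjective f hf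

theorem hasMonoCIM_one {i : ℕ} (hq : 0 < q) : HasMonoCIM q c i 1 :=
  ⟨true, fun _ => 0, monotone_const, fun _ => ⟨⟨0, pow_pos hq i⟩, Subsingleton.elim _ _⟩,
    fun a b hab => absurd (Subsingleton.elim a b) hab⟩

variable {J t : ℕ} {col : Bool} {f : Fin (q ^ (J + 1)) → Fin t}

theorem IsMonoCIM.color_eq_of_forall_div_eq (h : IsMonoCIM q c (J + 1) t col f) {a b : Fin t}
    {m m' : ℕ} (hm : m < q) (hm' : m' < q) (hne : m ≠ m')
    (ha : ∀ u, f u = a → (u : ℕ) / q ^ J = m) (hb : ∀ v, f v = b → (v : ℕ) / q ^ J = m') :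
    c m m' = col := by
  obtain ⟨-, hsurj, hedge⟩ := h
  have hab : a ≠ b := by
    rintro rfl
    obtain ⟨u, hu⟩ := hsurj a
    exact hne ((ha u hu).symm.trans (hb u hu))
  obtain ⟨u, v, hu, hv, huv⟩ := hedge a b hab
  have hpos : 0 < q ^ J := pow_pos (Nat.zero_lt_of_lt hm) J
  rw [← Nat.div_add_mod' u (q ^ J), ← Nat.div_add_mod' v (q ^ J), ha u hu, hb v hv,
    lexColor_mul_pow_add_of_ne hm hm' hne (Nat.mod_lt _ hpos) (Nat.mod_lt _ hpos)] at huv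
  exact huv

-- Block `m` is a copy of `K_{q^J}`; relabelling the intervals of `A` by their rank in `A`,
-- extended monotonically to the rest of the block, gives a minor there.
theorem IsMonoCIM.hasMonoCIM_card_of_forall_div_eq (h : IsMonoCIM q c (J + 1) t col f)
    (hJ : J ≠ 0) {m : ℕ} (hm : m < q) {A : Finset (Fin t)} (hA : A.Nonempty)
    (hAm : ∀ a ∈ A, ∀ u, f u = a → (u : ℕ) / q ^ J = m) : HasMonoCIM q c J #A := by
  obtain ⟨hmono, hsurj, hedge⟩ := h
  have hpos : 0 < q ^ J := pow_pos (Nat.zero_lt_of_lt hm) J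
  set e := A.orderEmbOfFin rfl
  obtain ⟨r, hr, hre⟩ := e.exists_monotone_leftInverse_of_fin hA.card_pos
  let emb : Fin (q ^ J) → Fin (q ^ (J + 1)) := fun x =>
    ⟨m * q ^ J + x, mul_pow_add_lt_pow_succ hm x.2⟩
  let low : Fin (q ^ (J + 1)) → Fin (q ^ J) := fun u => ⟨u % q ^ J, Nat.mod_lt _ hpos⟩
  have hemb : Monotone emb := fun x y hxy => Fin.mk_le_mk.2 (Nat.add_le_add_left hxy _)
  have hemb_low : ∀ i u, f u = e i → emb (low u) = u := fun i u hu => Fin.ext <| by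
    change m * q ^ J + (u : ℕ) % q ^ J = u
    rw [← hAm _ (A.orderEmbOfFin_mem rfl i) u hu]
    exact Nat.div_add_mod' u (q ^ J)
  have hlow : ∀ i u, f u = e i → r (f (emb (low u))) = i := fun i u hu => by
    rw [hemb_low i u hu, hu, hre]
  refine ⟨col, r ∘ f ∘ emb, hr.comp (hmono.comp hemb), fun i => ?_, fun i j hij => ?_⟩
  · obtain ⟨u, hu⟩ := hsurj (e i)
    exact ⟨low u, hlow i u hu⟩
  · obtain ⟨u, v, hu, hv, huv⟩ := hedge (e i) (e j) (e.injective.ne hij)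
    refine ⟨low u, low v, hlow i u hu, hlow j v hv, ?_⟩
    rw [← lexColor_mul_pow_add_self hJ hm (low u).2 (low v).2]
    have hu' := congrArg Fin.val (hemb_low i u hu)
    have hv' := congrArg Fin.val (hemb_low j v hv)
    simp only [emb] at hu' hv'
    rwa [hu', hv']

theorem IsMonoCIM.exists_hasMonoCIM_le (h : IsMonoCIM q c (J + 1) t col f) (hJ : J ≠ 0)
    (hq : 0 < q) {s : ℕ} (hclique : ∀ S : Finset ℕ, (∀ x ∈ S, x < q) →
      (∀ a ∈ S, ∀ b ∈ S, a ≠ b → c a b = col) → #S ≤ s) :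
    ∃ t', HasMonoCIM q c J t' ∧ t ≤ s * t' + q := by
  let blk : Fin (q ^ (J + 1)) → Fin q := fun u =>
    ⟨u / q ^ J, by rw [Nat.div_lt_iff_lt_mul (pow_pos hq J), ← pow_succ']; exact u.2⟩
  set I : Fin q → Finset (Fin t) := fun m => {a | ∀ u, f u = a → blk u = m}
  have hcount : t ≤ q + ∑ m, #(I m) := by
    have := card_le_card_add_sum_card_subset_fiber h.1 h.2.1 (b := blk)
      fun u v huv => Nat.div_le_div_right huv
    rw [Fintype.card_fin, Fintype.card_fin] at this
    convert this
  have hI : ∀ m, ∀ a ∈ I m, ∀ u, f u = a → (u : ℕ) / q ^ J = m := fun m a ha u hu => by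
    simp only [I, mem_filter, mem_univ, true_and] at ha
    exact congrArg Fin.val (ha u hu)
  set S : Finset (Fin q) := {m | (I m).Nonempty}
  have hS : #S ≤ s := by
    rw [← card_map Fin.valEmbedding]
    refine hclique _ (by simp) fun a ha b hb hab => ?_
    simp only [mem_map, Fin.valEmbedding_apply, S, mem_filter, mem_univ, true_and] at ha hb
    obtain ⟨m, ⟨x, hx⟩, rfl⟩ := ha
    obtain ⟨m', ⟨y, hy⟩, rfl⟩ := hb
    exact h.color_eq_of_forall_div_eq m.2 m'.2 hab (hI m x hx) (hI m' y hy)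
  obtain ⟨m₀, -, hm₀⟩ :=
    exists_max_image univ (fun m => #(I m)) (univ_nonempty_iff.2 ⟨⟨0, hq⟩⟩)
  have hsum : ∑ m, #(I m) ≤ s * #(I m₀) :=
    calc ∑ m, #(I m) = ∑ m ∈ S, #(I m) :=
          (sum_filter_of_ne fun m _ hm => card_pos.1 (Nat.pos_of_ne_zero hm)).symm
      _ ≤ #S * #(I m₀) := by simpa using sum_le_card_nsmul S _ _ fun m _ => hm₀ m (mem_univ m)
      _ ≤ s * #(I m₀) := Nat.mul_le_mul_right _ hS
  rcases (I m₀).eq_empty_or_nonempty with h₀ | h₀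
  · refine ⟨1, hasMonoCIM_one hq, ?_⟩
    rw [h₀, card_empty, mul_zero] at hsum
    omega
  · exact ⟨_, h.hasMonoCIM_card_of_forall_div_eq hJ m₀.2 h₀ (hI m₀), by omega⟩

end MonoCIM

theorem add_le_mul_pow_of_le_mul_add {P : ℕ → ℕ → Prop} {q s : ℕ} (hs : 2 ≤ s)
    (hbase : ∀ t, P 1 t → t ≤ q)
    (hstep : ∀ J t, J ≠ 0 → P (J + 1) t → ∃ t', P J t' ∧ t ≤ s * t' + q)
    {i t : ℕ} (hi : i ≠ 0) (ht : P i t) : t + q ≤ q * s ^ i := by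
  induction i generalizing t with
  | zero => exact absurd rfl hi
  | succ J ih =>
    rcases eq_or_ne J 0 with rfl | hJ
    · have := hbase t ht
      rw [zero_add, pow_one]
      nlinarith
    · obtain ⟨t', ht', htt'⟩ := hstep J t hJ ht
      have := ih hJ ht'
      rw [pow_succ]
      nlinarith

theorem stmt11_general (q s : ℕ) (hq : 2 ≤ q) (c : ℕ → ℕ → Bool)
    (hnoclique : ∀ (col : Bool) (S : Finset ℕ), (∀ x ∈ S, x < q) →
      s ≤ S.card → ∃ a ∈ S, ∃ b ∈ S, a ≠ b ∧ c a b ≠ col) :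
    (∀ i : ℕ, 2 ≤ i → ∀ t : ℕ, HasMonoCIM q c i t →
      ∃ t' : ℕ, HasMonoCIM q c (i - 1) t' ∧ t ≤ s * t' + q) ∧
    (∀ i : ℕ, 1 ≤ i → ∀ t : ℕ, HasMonoCIM q c i t → t ≤ q * s ^ i) := by
  have hclique : ∀ col (S : Finset ℕ), (∀ x ∈ S, x < q) →
      (∀ a ∈ S, ∀ b ∈ S, a ≠ b → c a b = col) → #S ≤ s := fun col S hSq hS => by
    by_contra! hs
    obtain ⟨a, ha, b, hb, hab, hc⟩ := hnoclique col S hSq hs.le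
    exact hc (hS a ha b hb hab)
  -- A single vertex is a monochromatic clique.
  have hs : 2 ≤ s := by
    by_contra! hs
    obtain ⟨a, ha, b, hb, hab, -⟩ := hnoclique true {0} (by simp; omega) (by simp; omega)
    exact hab ((mem_singleton.1 ha).trans (mem_singleton.1 hb).symm)
  have hstep : ∀ J t, J ≠ 0 → HasMonoCIM q c (J + 1) t →
      ∃ t', HasMonoCIM q c J t' ∧ t ≤ s * t' + q :=
    fun J t hJ ⟨col, _, hf⟩ => IsMonoCIM.exists_hasMonoCIM_le hf hJ (by omega) (hclique col)
  refine ⟨fun i hi t ht => ?_, fun i hi t ht => ?_⟩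
  · obtain ⟨J, rfl⟩ := Nat.exists_eq_add_of_le' hi
    exact hstep (J + 1) t (by omega) ht
  · have := add_le_mul_pow_of_le_mul_add hs (fun t ht => by simpa using ht.le_pow) hstep
      (by omega) ht
    omega

/-- **Iterated lexicographic substitutions have small monochromatic complete
interval minors.**  Let `q ≥ 2` and let `c` be a symmetric 2-coloring of the
edges of the ordered complete graph `K_q` with no monochromatic clique of size
`s`.  If `f(i)` denotes the maximum size of a monochromatic complete interval
minor of the iterated lexicographic coloring of `K_{q^i}`, then
`f(i) ≤ s·f(i−1) + q` for every `i ≥ 2`, and consequently `f(i) ≤ q·s^i` for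
every `i ≥ 1`. -/
theorem stmt11 (q s : ℕ) (hq : 2 ≤ q) (c : ℕ → ℕ → Bool)
    (hsym : ∀ u v : ℕ, c u v = c v u)
    (hnoclique : ∀ (col : Bool) (S : Finset ℕ), (∀ x ∈ S, x < q) →
      s ≤ S.card → ∃ a ∈ S, ∃ b ∈ S, a ≠ b ∧ c a b ≠ col) :
    (∀ i : ℕ, 2 ≤ i → ∀ t : ℕ, HasMonoCIM q c i t →
      ∃ t' : ℕ, HasMonoCIM q c (i - 1) t' ∧ t ≤ s * t' + q) ∧
    (∀ i : ℕ, 1 ≤ i → ∀ t : ℕ, HasMonoCIM q c i t → t ≤ q * s ^ i) :=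
  stmt11_general q s hq c hnoclique
end

section
/- Suppose a class C_r of ordered graphs has the property that every member contains a looped K_t interval minor, and suppose (G, <) has a refined quotient of type R'R' lying in C_r (as in the delayed-rank decomposition). If H is that refined quotient and I_1 < ... < I_t is a looped K_t interval minor model in H where every interval contains a vertex of type R (i.e., a vertex with a neighbor to the right of V(H) in G), then (G, <) contains a right-lazy looped K_{t+1} interval minor, witnessed by appending the interval {x ∈ V(G) : V(H) < x}. -/
/-!
Send a vertex `x` of `G` to the interval of the model containing the first vertex of `H` at or
after `x`, and send every vertex beyond `V(H)` to a new last interval. This is a monotone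
extension of the model, so the old intervals keep their edges; the vertices of type `R` give an
edge from each old interval into the new one, which need not contain an edge itself.
-/

section ExtendRight

variable {α : Type*} [Preorder α] {W : Set α} {t : ℕ}

noncomputable def extendRight (f : W → Fin t) (x : α) : Fin (t + 1) :=
  ⨅ (z : W) (_ : x ≤ z), (f z).castSucc

theorem extendRight_mono (f : W → Fin t) : Monotone (extendRight f) :=
  fun _ _ hxy => le_iInf₂ fun z hz => iInf₂_le z (hxy.trans hz)

theorem extendRight_coe {f : W → Fin t} (hf : Monotone f) (u : W) :
    extendRight f u = (f u).castSucc :=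
  le_antisymm (iInf₂_le u le_rfl) (le_iInf₂ fun _ hz => Fin.castSucc_le_castSucc_iff.2 (hf hz))

theorem extendRight_eq_last (f : W → Fin t) {x : α} (hx : ∀ z : W, (z : α) < x) :
    extendRight f x = Fin.last t :=
  le_antisymm (Fin.le_last _) (le_iInf₂ fun z hz => absurd hz (hx z).not_ge)

theorem exists_adj_extendRight {f : W → Fin t} (hf : Monotone f) (G : SimpleGraph α)
    {i j : Fin t} (h : ∃ u v : W, f u = i ∧ f v = j ∧ G.Adj u v) :
    ∃ u v : α, extendRight f u = i.castSucc ∧ extendRight f v = j.castSucc ∧ G.Adj u v := by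
  obtain ⟨u, v, rfl, rfl, huv⟩ := h
  exact ⟨u, v, extendRight_coe hf u, extendRight_coe hf v, huv⟩

end ExtendRight

theorem stmt17_general {V : Type*} [LinearOrder V] (G : SimpleGraph V)
    (t : ℕ) (ht : 1 ≤ t) (W : Set V)
    (f : {v : V // v ∈ W} → Fin t) (hmono : Monotone f)
    (hedges : ∀ i j : Fin t, i ≠ j → ∃ u v : {v : V // v ∈ W},
      f u = i ∧ f v = j ∧ G.Adj (u : V) (v : V))
    (hloops : ∀ i : Fin t, ∃ u v : {v : V // v ∈ W},
      f u = i ∧ f v = i ∧ G.Adj (u : V) (v : V))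
    (htypeR : ∀ i : Fin t, ∃ w : {v : V // v ∈ W}, f w = i ∧
      ∃ y : V, (∀ z : {v : V // v ∈ W}, (z : V) < y) ∧ G.Adj (w : V) y) :
    ∃ g : V → Fin (t + 1), Monotone g ∧ Function.Surjective g ∧
      (∀ i j : Fin (t + 1), i ≠ j → ∃ u v : V, g u = i ∧ g v = j ∧ G.Adj u v) ∧
      (∀ i : Fin (t + 1), i ≠ Fin.last t →
        ∃ u v : V, g u = i ∧ g v = i ∧ G.Adj u v) ∧
      (∀ x : V, (∀ z : {v : V // v ∈ W}, (z : V) < x) → g x = Fin.last t) := by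
  have typeR_edge (i : Fin t) : ∃ u v : V,
      extendRight f u = i.castSucc ∧ extendRight f v = Fin.last t ∧ G.Adj u v := by
    obtain ⟨w, rfl, y, hy, hwy⟩ := htypeR i
    exact ⟨w, y, extendRight_coe hmono w, extendRight_eq_last f hy, hwy⟩
  refine ⟨extendRight f, extendRight_mono f, ?_, ?_, ?_, fun x => extendRight_eq_last f⟩
  · intro i
    induction i using Fin.lastCases with
    | last => obtain ⟨-, y, -, hy, -⟩ := typeR_edge ⟨0, ht⟩; exact ⟨y, hy⟩
    | cast i => obtain ⟨u, -, hu, -⟩ := typeR_edge i; exact ⟨u, hu⟩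
  · intro i j hij
    induction i using Fin.lastCases with
    | last =>
      induction j using Fin.lastCases with
      | last => exact absurd rfl hij
      | cast j => obtain ⟨u, v, hu, hv, huv⟩ := typeR_edge j; exact ⟨v, u, hv, hu, huv.symm⟩
    | cast i =>
      induction j using Fin.lastCases with
      | last => exact typeR_edge i
      | cast j => exact exists_adj_extendRight hmono G (hedges i j (ne_of_apply_ne _ hij))
  · intro i hi
    obtain ⟨i, rfl⟩ := Fin.exists_castSucc_eq.2 hi
    exact exists_adj_extendRight hmono G (hloops i)

/-- **Extending a looped `K_t` model of a refined quotient of type `R'R'`.**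
Let `(G, <)` be a finite ordered graph, and let `H` be a subgraph of `G`
induced on a set `W` of vertices (e.g. a refined quotient of type `R'R'`
belonging to a class all of whose members contain looped `K_t` interval
minors).  Suppose `I_1 < … < I_t` is a looped `K_t` interval minor model in `H`
(encoded by a monotone surjection `f : W → Fin t`, with an edge of `G` between
any two distinct intervals and an edge inside each interval) in which every
interval contains a vertex of type `R`, i.e. a vertex having a `G`-neighbor
strictly to the right of all of `W`.  Then `(G, <)` contains a right-lazy
looped `K_{t+1}` interval minor, witnessed by appending the interval
`{x : V(G) : W < x}`. -/
theorem stmt17 {V : Type*} [Fintype V] [LinearOrder V] (G : SimpleGraph V)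
    (t : ℕ) (ht : 1 ≤ t) (W : Set V)
    (f : {v : V // v ∈ W} → Fin t) (hmono : Monotone f)
    (hsurj : Function.Surjective f)
    (hedges : ∀ i j : Fin t, i ≠ j → ∃ u v : {v : V // v ∈ W},
      f u = i ∧ f v = j ∧ G.Adj (u : V) (v : V))
    (hloops : ∀ i : Fin t, ∃ u v : {v : V // v ∈ W},
      f u = i ∧ f v = i ∧ G.Adj (u : V) (v : V))
    (htypeR : ∀ i : Fin t, ∃ w : {v : V // v ∈ W}, f w = i ∧
      ∃ y : V, (∀ z : {v : V // v ∈ W}, (z : V) < y) ∧ G.Adj (w : V) y) :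
    ∃ g : V → Fin (t + 1), Monotone g ∧ Function.Surjective g ∧
      (∀ i j : Fin (t + 1), i ≠ j → ∃ u v : V, g u = i ∧ g v = j ∧ G.Adj u v) ∧
      (∀ i : Fin (t + 1), i ≠ Fin.last t →
        ∃ u v : V, g u = i ∧ g v = i ∧ G.Adj u v) ∧
      (∀ x : V, (∀ z : {v : V // v ∈ W}, (z : V) < x) → g x = Fin.last t) :=
  stmt17_general G t ht W f hmono hedges hloops htypeR
end
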